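/- Let G be a finite connected simple graph with parts P_1, …, P_N and a rooted spanning tree T, and suppose H = (H_1, …, H_N) is a T-restricted shortcut with congestion c ≥ 1 and block parameter b ≥ 1. Let U be a set of edges of T such that every edge e ∈ U can see, relative to U, strictly more than 2c distinct parts. Then the number of indices i ∈ {1, …, N} for which at least 2b edges of U belong to E(G[P_i]) ∪ H_i is at most N/2. -/

import Mathlib

/-!
Double counting over the pairs (edge of `U`, part). Each edge of `U` sees more than `2c` parts,
and by congestion lies in at most `c` of the sets `E(G[P_i]) ∪ H_i`. For a fixed part, a vertex
is seen by at most one edge of `U` (the first edge of `U` on its path to the root), and visibility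
survives walking inside a block of `H_i` until an edge of `U ∩ H_i` is crossed; charging every edge
of `U` that sees `P_i` to a block representative or to such a crossing shows that at most
`b + |U ∩ (E(G[P_i]) ∪ H_i)|` edges of `U` see `P_i`. Summing gives `(2c+1)|U| ≤ Nb + c|U|`, so
`c|U| < Nb`, while each part with at least `2b` edges of `U` contributes `2b` to a sum that is at
most `c|U|`.
-/

open SimpleGraph

/-- The edge set of the subgraph `G[P] + H`: edges of `G` with both endpoints in `P`,
together with the shortcut edges `H`. -/
def partEdges {V : Type*} (G : SimpleGraph V) (P : Set V) (H : Set (Sym2 V)) :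
    Set (Sym2 V) :=
  {e | e ∈ G.edgeSet ∧ ∀ v ∈ e, v ∈ P} ∪ H

/-- The number of block components of `H` with respect to the part `P`:
connected components of the spanning subgraph `(V, H)` that intersect `P`. -/
noncomputable def numBlocks {V : Type*} (P : Set V) (H : Set (Sym2 V)) : ℕ :=
  {C : (SimpleGraph.fromEdgeSet H).ConnectedComponent |
    ∃ v ∈ P, (SimpleGraph.fromEdgeSet H).connectedComponentMk v = C}.ncard

/-- The edge `e` of the tree `T` (rooted at `r`, with parent function `parent`)
can see the vertex `u` relative to the edge set `U`: `u` lies in the subtree below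
`e` and the `T`-path from `u` to the lower endpoint of `e` contains no edge of `U`. -/
def canSee {V : Type*} (T : SimpleGraph V) (r : V) (parent : V → V)
    (U : Set (Sym2 V)) (e : Sym2 V) (u : V) : Prop :=
  ∃ v : V, v ≠ r ∧ e = s(v, parent v) ∧
    T.dist r u = T.dist r v + T.dist v u ∧
    ∀ p : T.Walk u v, p.IsPath → ∀ e' ∈ p.edges, e' ∉ U

open Finset in
theorem sum_ncard_setOf_comm {α ι : Type*} [Fintype ι] (s : Finset α) (R : α → ι → Prop) :
    ∑ a ∈ s, {i | R a i}.ncard = ∑ i, {a | a ∈ s ∧ R a i}.ncard := by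
  classical
  have h₁ : ∀ a, {i | R a i}.ncard = #(univ.filter (R a)) := fun a => by
    rw [← Set.ncard_coe_finset]; simp
  have h₂ : ∀ i, {a | a ∈ s ∧ R a i}.ncard = #(s.filter (R · i)) := fun i => by
    rw [← Set.ncard_coe_finset]; simp
  simp only [h₁, h₂, card_filter]
  exact sum_comm

theorem Set.ncard_le_ncard_of_forall_subsingleton {α β : Type*} {s : Set α} {t : Set β}
    (R : α → β → Prop) (hs : ∀ a ∈ s, ∃ b ∈ t, R a b)
    (ht : ∀ b ∈ t, {a | a ∈ s ∧ R a b}.Subsingleton) (htf : t.Finite := by toFinite_tac) :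
    s.ncard ≤ t.ncard := by
  rcases s.eq_empty_or_nonempty with rfl | ⟨a₀, ha₀⟩
  · simp
  have : Nonempty β := ⟨(hs a₀ ha₀).choose⟩
  choose! f hft hf using hs
  refine Set.ncard_le_ncard_of_injOn f hft (fun a ha a' ha' h => ?_) htf
  exact ht (f a) (hft a ha) ⟨ha, hf a ha⟩ ⟨ha', h ▸ hf a' ha'⟩

theorem two_mul_ncard_heavy_le {α ι : Type*} [Finite α] [Fintype ι] (U : Set α)
    (S : ι → Set α) (sees : α → ι → Prop) (b c : ℕ) (hb : 1 ≤ b)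
    (hsees : ∀ e ∈ U, 2 * c < {i | sees e i}.ncard)
    (hS : ∀ e ∈ U, {i | e ∈ S i}.ncard ≤ c)
    (hcharge : ∀ i, {e | e ∈ U ∧ sees e i}.ncard ≤ b + (U ∩ S i).ncard) :
    2 * {i | 2 * b ≤ (U ∩ S i).ncard}.ncard ≤ Fintype.card ι := by
  classical
  obtain ⟨s, rfl⟩ := U.toFinite.exists_finset_coe
  set M := {i | 2 * b ≤ ((s : Set α) ∩ S i).ncard}
  have hsum : ∑ i, ((s : Set α) ∩ S i).ncard ≤ s.card * c :=
    (sum_ncard_setOf_comm s fun e i => e ∈ S i).symm.trans_le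
      (by simpa using Finset.sum_le_card_nsmul s _ c hS)
  have hcard : s.card * (2 * c + 1) ≤ Fintype.card ι * b + s.card * c :=
    calc s.card * (2 * c + 1) ≤ ∑ e ∈ s, {i | sees e i}.ncard := by
          simpa using Finset.card_nsmul_le_sum s _ (2 * c + 1) hsees
      _ = ∑ i, {e | e ∈ s ∧ sees e i}.ncard := sum_ncard_setOf_comm s sees
      _ ≤ ∑ i, (b + ((s : Set α) ∩ S i).ncard) := Finset.sum_le_sum fun i _ => hcharge i
      _ ≤ Fintype.card ι * b + s.card * c := by
          rw [Finset.sum_add_distrib, Finset.sum_const, Finset.card_univ, smul_eq_mul]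
          omega
  have hM : M.ncard * (2 * b) ≤ s.card * c :=
    calc M.ncard * (2 * b) ≤ ∑ i ∈ M.toFinset, ((s : Set α) ∩ S i).ncard := by
          rw [Set.ncard_eq_toFinset_card', ← smul_eq_mul]
          exact Finset.card_nsmul_le_sum _ _ _ fun i hi => by simpa [M] using hi
      _ ≤ ∑ i, ((s : Set α) ∩ S i).ncard := Finset.sum_le_sum_of_subset (Finset.subset_univ _)
      _ ≤ s.card * c := hsum
  have key : 2 * M.ncard * (b * (c + 1)) ≤ Fintype.card ι * (b * (c + 1)) :=
    calc 2 * M.ncard * (b * (c + 1)) = M.ncard * (2 * b) * (c + 1) := by ring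
      _ ≤ c * (s.card * (c + 1)) := by nlinarith
      _ ≤ c * (Fintype.card ι * b) := Nat.mul_le_mul_left c (by linarith)
      _ ≤ Fintype.card ι * (b * (c + 1)) := by nlinarith
  exact Nat.le_of_mul_le_mul_right key (by positivity)

section

variable {V : Type*} {G T : SimpleGraph V}

namespace SimpleGraph

theorem IsTree.length_eq_dist_of_isPath (hT : T.IsTree) {u v : V} {p : T.Walk u v}
    (hp : p.IsPath) : p.length = T.dist u v := by
  obtain ⟨q, hq, hql⟩ := hT.connected.exists_path_of_dist u v
  rw [(hT.existsUnique_path u v).unique hp hq, hql]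

theorem Walk.dist_getVert_le {a b : V} (p : G.Walk a b) {j k : ℕ} (hjk : j ≤ k) :
    G.dist (p.getVert j) (p.getVert k) ≤ k - j := by
  have h := dist_le ((p.drop j).take (k - j))
  rw [Walk.take_length, Walk.drop_getVert, Nat.add_sub_cancel' hjk] at h
  exact h.trans inf_le_left

theorem Walk.dist_getVert_getVert (hG : G.Connected) {a b : V} (p : G.Walk a b)
    (hp : p.length = G.dist a b) {j k : ℕ} (hjk : j ≤ k) (hk : k ≤ p.length) :
    G.dist (p.getVert j) (p.getVert k) = k - j := by
  have h₁ := p.dist_getVert_le (Nat.zero_le j)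
  have h₂ := p.dist_getVert_le hjk
  have h₃ := p.dist_getVert_le hk
  rw [Walk.getVert_zero] at h₁
  rw [Walk.getVert_length] at h₃
  have := hG.dist_triangle (u := a) (v := p.getVert j) (w := p.getVert k)
  have := hG.dist_triangle (u := a) (v := p.getVert k) (w := b)
  omega

theorem IsTree.eq_of_adj_of_dist_add_one (hT : T.IsTree) (r : V) {x y y' : V}
    (hy : T.Adj x y) (hy' : T.Adj x y') (hdy : T.dist r y + 1 = T.dist r x)
    (hdy' : T.dist r y' + 1 = T.dist r x) : y = y' := by
  obtain ⟨q, hq⟩ := hT.connected.exists_walk_length_eq_dist r y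
  obtain ⟨q', hq'⟩ := hT.connected.exists_walk_length_eq_dist r y'
  have hpath : (q.concat hy.symm).IsPath :=
    Walk.isPath_of_length_eq_dist _ (by rw [Walk.length_concat]; omega)
  have hpath' : (q'.concat hy'.symm).IsPath :=
    Walk.isPath_of_length_eq_dist _ (by rw [Walk.length_concat]; omega)
  have h := congrArg Walk.penultimate ((hT.existsUnique_path r x).unique hpath hpath')
  simpa only [Walk.penultimate_concat] using h

theorem IsTree.eq_getVert_of_dist_eq_add (hT : T.IsTree) {r u v : V}
    (h : T.dist r u = T.dist r v + T.dist v u) (w : T.Walk r u) (hw : w.length = T.dist r u) :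
    v = w.getVert (T.dist r v) := by
  obtain ⟨q₁, hq₁⟩ := hT.connected.exists_walk_length_eq_dist r v
  obtain ⟨q₂, hq₂⟩ := hT.connected.exists_walk_length_eq_dist v u
  have hq : (q₁.append q₂).IsPath :=
    Walk.isPath_of_length_eq_dist _ (by rw [Walk.length_append]; omega)
  rw [(hT.existsUnique_path r u).unique (w.isPath_of_length_eq_dist hw) hq,
    Walk.getVert_append, hq₁]
  simp

theorem Walk.exists_eq_append_cons_of_exists_mem_edges (U : Set (Sym2 V))
    {a b : V} (q : G.Walk a b) (h : ∃ f ∈ q.edges, f ∈ U) :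
    ∃ (x y : V) (hxy : G.Adj x y) (q₁ : G.Walk a x) (q₂ : G.Walk y b),
      q = q₁.append (.cons hxy q₂) ∧ (∀ f ∈ q₁.edges, f ∉ U) ∧ s(x, y) ∈ U := by
  induction q with
  | nil => simp at h
  | @cons a m b hadj p ih =>
    by_cases hhead : s(a, m) ∈ U
    · exact ⟨a, m, hadj, .nil, p, rfl, by simp, hhead⟩
    · have hp : ∃ f ∈ p.edges, f ∈ U := by
        obtain ⟨f, hf, hfU⟩ := h
        rw [Walk.edges_cons, List.mem_cons] at hf
        exact hf.elim (fun hf => absurd (hf ▸ hfU) hhead) fun hf => ⟨f, hf, hfU⟩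
      obtain ⟨x, y, hxy, q₁, q₂, rfl, hq₁, hU⟩ := ih hp
      refine ⟨x, y, hxy, .cons hadj q₁, q₂, rfl, ?_, hU⟩
      simp only [Walk.edges_cons, List.mem_cons, forall_eq_or_imp]
      exact ⟨hhead, hq₁⟩

theorem reachable_fromEdgeSet_of_walk {H : Set (Sym2 V)} {a b : V} (q : T.Walk a b)
    (hq : ∀ f ∈ q.edges, f ∈ H) : (fromEdgeSet H).Reachable a b :=
  ⟨q.transfer _ fun f hf => by
    rw [edgeSet_fromEdgeSet]
    exact ⟨hq f hf, T.not_isDiag_of_mem_edgeSet (q.edges_subset_edgeSet hf)⟩⟩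

theorem Reachable.exists_isPath_of_fromEdgeSet {H : Set (Sym2 V)} (hH : H ⊆ T.edgeSet)
    {a b : V} (h : (fromEdgeSet H).Reachable a b) :
    ∃ q : T.Walk a b, q.IsPath ∧ ∀ f ∈ q.edges, f ∈ H := by
  obtain ⟨p, hp⟩ := h.exists_isPath
  have hle : fromEdgeSet H ≤ T := by
    rw [fromEdgeSet_le]
    exact fun f hf => hH hf.1
  refine ⟨p.mapLe hle, hp.mapLe hle, fun f hf => ?_⟩
  rw [Walk.edges_mapLe_eq_edges] at hf
  have := p.edges_subset_edgeSet hf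
  rw [edgeSet_fromEdgeSet] at this
  exact this.1

end SimpleGraph

def IsParentMap (T : SimpleGraph V) (r : V) (parent : V → V) : Prop :=
  ∀ v, v ≠ r → T.Adj v (parent v) ∧ T.dist r (parent v) + 1 = T.dist r v

theorem IsParentMap.eq_parent (hT : T.IsTree) {r : V} {parent : V → V}
    (hpar : IsParentMap T r parent) {x y : V} (hx : x ≠ r) (hxy : T.Adj x y)
    (hd : T.dist r y + 1 = T.dist r x) : y = parent x :=
  hT.eq_of_adj_of_dist_add_one r hxy (hpar x hx).1 hd (hpar x hx).2

/-- If `v` and `v'` are both ancestors of `u` and `v` is the higher one, the path from `u` up to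
`v` passes through the edge joining `v'` to its parent. -/
theorem parent_edge_mem_edges (hT : T.IsTree) {r : V} {parent : V → V}
    (hpar : IsParentMap T r parent) {u v v' : V} (hv' : v' ≠ r)
    (hv : T.dist r u = T.dist r v + T.dist v u) (hv'u : T.dist r u = T.dist r v' + T.dist v' u)
    (hlt : T.dist r v < T.dist r v') (p : T.Walk u v) (hp : p.IsPath) :
    s(v', parent v') ∈ p.edges := by
  obtain ⟨w, hw⟩ := hT.connected.exists_walk_length_eq_dist r u
  have hv_eq := hT.eq_getVert_of_dist_eq_add hv w hw
  have hv'_eq := hT.eq_getVert_of_dist_eq_add hv'u w hw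
  have hadj : T.Adj v' (w.getVert (T.dist r v' - 1)) := by
    have := w.adj_getVert_succ (i := T.dist r v' - 1) (by omega)
    rw [Nat.sub_add_cancel (by omega), ← hv'_eq] at this
    exact this.symm
  have hpar_eq : parent v' = w.getVert (T.dist r v' - 1) := by
    refine (hpar.eq_parent hT hv' hadj ?_).symm
    have := w.dist_getVert_getVert hT.connected hw (Nat.zero_le (T.dist r v' - 1)) (by omega)
    rw [Walk.getVert_zero] at this
    omega
  have hdist : T.dist (parent v') v = T.dist r v' - 1 - T.dist r v := by
    have := w.dist_getVert_getVert hT.connected hw (j := T.dist r v) (k := T.dist r v' - 1)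
      (by omega) (by omega)
    rwa [← hv_eq, ← hpar_eq, SimpleGraph.dist_comm] at this
  obtain ⟨p₁, hp₁⟩ := hT.connected.exists_walk_length_eq_dist u v'
  obtain ⟨p₂, hp₂⟩ := hT.connected.exists_walk_length_eq_dist (parent v') v
  have hlen : (p₁.append (.cons (hpar v' hv').1 p₂)).length = T.dist u v := by
    rw [Walk.length_append, Walk.length_cons, hp₁, hp₂, dist_comm (u := u), dist_comm (u := u)]
    omega
  rw [(hT.existsUnique_path u v).unique hp (Walk.isPath_of_length_eq_dist _ hlen)]
  simp [Walk.edges_append]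

theorem canSee_unique (hT : T.IsTree) {r : V} {parent : V → V} (hpar : IsParentMap T r parent)
    {U : Set (Sym2 V)} {e e' : Sym2 V} {u : V} (he : e ∈ U) (he' : e' ∈ U)
    (h : canSee T r parent U e u) (h' : canSee T r parent U e' u) : e = e' := by
  obtain ⟨v, hv, rfl, hvu, hfree⟩ := h
  obtain ⟨v', hv', rfl, hv'u, hfree'⟩ := h'
  obtain ⟨p, hp, -⟩ := hT.connected.exists_path_of_dist u v
  obtain ⟨p', hp', -⟩ := hT.connected.exists_path_of_dist u v'
  rcases lt_trichotomy (T.dist r v) (T.dist r v') with hlt | heq | hlt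
  · exact absurd he' (hfree p hp _ (parent_edge_mem_edges hT hpar hv' hvu hv'u hlt p hp))
  · obtain ⟨w, hw⟩ := hT.connected.exists_walk_length_eq_dist r u
    rw [hT.eq_getVert_of_dist_eq_add hvu w hw, hT.eq_getVert_of_dist_eq_add hv'u w hw, heq]
  · exact absurd he (hfree' p' hp' _ (parent_edge_mem_edges hT hpar hv hv'u hvu hlt p' hp'))

theorem canSee_of_adj (hT : T.IsTree) {r : V} {parent : V → V} (hpar : IsParentMap T r parent)
    {U : Set (Sym2 V)} {e : Sym2 V} {u u₁ : V} (he : e ∈ U) (h : canSee T r parent U e u)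
    (hadj : T.Adj u u₁) (hu : s(u, u₁) ∉ U) : canSee T r parent U e u₁ := by
  obtain ⟨v, hv, rfl, hvu, hfree⟩ := h
  rcases hT.dist_eq_dist_add_one_of_adj r hadj with hup | hdown
  · -- `u₁` is the parent of `u`, and the path from `u` up to `v` starts with the edge to `u₁`
    have hur : u ≠ r := by rintro rfl; simp at hup
    have hu₁ : u₁ = parent u := hpar.eq_parent hT hur hadj hup.symm
    obtain ⟨q, hq, hql⟩ := hT.connected.exists_path_of_dist u v
    have huv : u ≠ v := by rintro rfl; exact hu (hu₁ ▸ he)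
    obtain ⟨x, hux, q', rfl⟩ := Walk.exists_eq_cons_of_ne huv q
    have hq' : q'.IsPath := (Walk.cons_isPath_iff _ _).mp hq |>.1
    have hq'l : q'.length = T.dist x v := hT.length_eq_dist_of_isPath hq'
    rw [Walk.length_cons] at hql
    have hcomm : T.dist v u = T.dist u v := SimpleGraph.dist_comm
    have hx : x = u₁ := by
      rw [hu₁]
      refine hpar.eq_parent hT hur hux ?_
      have := hT.connected.dist_triangle (u := r) (v := v) (w := x)
      have : T.dist v x = T.dist x v := SimpleGraph.dist_comm
      rcases hT.dist_eq_dist_add_one_of_adj r hux with h | h <;> omega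
    subst hx
    refine ⟨v, hv, rfl, ?_, fun p hp f hf => hfree _ hq f ?_⟩
    · rw [SimpleGraph.dist_comm (u := v) (v := x)]
      omega
    · rw [(hT.existsUnique_path x v).unique hp hq'] at hf
      simp [hf]
  · -- `u₁` is a child of `u`, so the path from `u₁` to `v` goes through `u`
    obtain ⟨q, hq, hql⟩ := hT.connected.exists_path_of_dist u v
    have h₁ : T.dist v u₁ ≤ q.length + 1 := by simpa using dist_le ((q.reverse).concat hadj)
    have h₂ := hT.connected.dist_triangle (u := r) (v := v) (w := u₁)
    have h₃ : T.dist u v = T.dist v u := SimpleGraph.dist_comm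
    have h₄ : T.dist u₁ v = T.dist v u₁ := SimpleGraph.dist_comm
    have hq₁ : (Walk.cons hadj.symm q).IsPath :=
      Walk.isPath_of_length_eq_dist _ (by rw [Walk.length_cons]; omega)
    refine ⟨v, hv, rfl, by omega, fun p hp f hf => ?_⟩
    rw [(hT.existsUnique_path u₁ v).unique hp hq₁, Walk.edges_cons, List.mem_cons] at hf
    rcases hf with rfl | hf
    · rwa [Sym2.eq_swap]
    · exact hfree q hq f hf

theorem canSee_of_walk (hT : T.IsTree) {r : V} {parent : V → V} (hpar : IsParentMap T r parent)
    {U : Set (Sym2 V)} {e : Sym2 V} {u u' : V} (he : e ∈ U) (h : canSee T r parent U e u)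
    (w : T.Walk u u') (hw : ∀ f ∈ w.edges, f ∉ U) : canSee T r parent U e u' := by
  induction w with
  | nil => exact h
  | cons hadj p ih =>
    simp only [Walk.edges_cons, List.mem_cons, forall_eq_or_imp] at hw
    exact ih (canSee_of_adj hT hpar he h hadj hw.1) hw.2

noncomputable def blockRep (H : Set (Sym2 V)) (x : V) : V :=
  ((fromEdgeSet H).connectedComponentMk x).out

theorem blockRep_eq_of_reachable {H : Set (Sym2 V)} {x y : V}
    (h : (fromEdgeSet H).Reachable x y) : blockRep H x = blockRep H y := by
  rw [blockRep, blockRep, ConnectedComponent.sound h]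

theorem reachable_blockRep (H : Set (Sym2 V)) (x : V) :
    (fromEdgeSet H).Reachable x (blockRep H x) :=
  ConnectedComponent.exact (Quot.out_eq _).symm

/-- An edge of `U` seeing `u` also sees either the representative of the block of `u`, or the
endpoint `x` farther from that representative of the first edge of `U` on the `H`-path from `u`
to it. -/
theorem canSee_blockRep_or_exists (hT : T.IsTree) {r : V} {parent : V → V}
    (hpar : IsParentMap T r parent) {U H : Set (Sym2 V)} (hH : H ⊆ T.edgeSet) {e : Sym2 V}
    {u : V} (he : e ∈ U) (h : canSee T r parent U e u) :
    canSee T r parent U e (blockRep H u) ∨ ∃ x y, s(x, y) ∈ U ∩ H ∧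
      T.dist x (blockRep H x) = T.dist y (blockRep H x) + 1 ∧ canSee T r parent U e x := by
  obtain ⟨q, hq, hqH⟩ := (reachable_blockRep H u).exists_isPath_of_fromEdgeSet hH
  by_cases hqU : ∃ f ∈ q.edges, f ∈ U
  swap
  · push Not at hqU
    exact .inl (canSee_of_walk hT hpar he h q hqU)
  obtain ⟨x, y, hxy, q₁, q₂, rfl, hq₁, hxyU⟩ := q.exists_eq_append_cons_of_exists_mem_edges U hqU
  have hxyH : s(x, y) ∈ H := hqH _ (by simp [Walk.edges_append])
  have hrep : blockRep H x = blockRep H u := (blockRep_eq_of_reachable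
    (reachable_fromEdgeSet_of_walk q₁ fun f hf => hqH f (by simp [Walk.edges_append, hf]))).symm
  have hq₂ : (Walk.cons hxy q₂).IsPath := hq.of_append_right
  have hx := hT.length_eq_dist_of_isPath hq₂
  have hy := hT.length_eq_dist_of_isPath ((Walk.cons_isPath_iff _ _).mp hq₂).1
  rw [Walk.length_cons] at hx
  exact .inr ⟨x, y, ⟨hxyU, hxyH⟩, by rw [hrep]; omega, canSee_of_walk hT hpar he h q₁ hq₁⟩

/-- Charging: by `canSee_blockRep_or_exists` every edge of `U` seeing `P` sees a point of `A₁ ∪ A₂`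
below, each vertex is seen by at most one edge of `U`, and every edge of `U ∩ H` has at most one
endpoint in `A₂`. -/
theorem ncard_canSee_le [Finite V] (hT : T.IsTree) {r : V} {parent : V → V}
    (hpar : IsParentMap T r parent) (U : Set (Sym2 V)) (P : Set V) (H : Set (Sym2 V))
    (hH : H ⊆ T.edgeSet) :
    {e | e ∈ U ∧ ∃ u ∈ P, canSee T r parent U e u}.ncard ≤ numBlocks P H + (U ∩ H).ncard := by
  set A₁ : Set V := blockRep H '' P
  set A₂ : Set V :=
    {x | ∃ y, s(x, y) ∈ U ∩ H ∧ T.dist x (blockRep H x) = T.dist y (blockRep H x) + 1}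
  have hA₁ : A₁.ncard ≤ numBlocks P H := by
    have : A₁ = Quot.out '' ((fromEdgeSet H).connectedComponentMk '' P) :=
      (Set.image_image Quot.out (fromEdgeSet H).connectedComponentMk P).symm
    rw [this]
    exact Set.ncard_image_le (Set.toFinite _)
  have hA₂ : A₂.ncard ≤ (U ∩ H).ncard := by
    refine Set.ncard_le_ncard_of_forall_subsingleton
      (fun x f => ∃ y, f = s(x, y) ∧ T.dist x (blockRep H x) = T.dist y (blockRep H x) + 1)
      (fun x ⟨y, hy, hd⟩ => ⟨_, hy, y, rfl, hd⟩) ?_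
    rintro f ⟨-, hfH⟩ x ⟨-, y, rfl, hd⟩ x' ⟨-, y', hf, hd'⟩
    rcases Sym2.eq_iff.mp hf with ⟨rfl, -⟩ | ⟨rfl, rfl⟩
    · rfl
    · have hxy : x ≠ y := by rintro rfl; omega
      have := blockRep_eq_of_reachable (Adj.reachable ((fromEdgeSet_adj _).mpr ⟨hfH, hxy⟩))
      rw [this] at hd
      omega
  calc _ ≤ (A₁ ∪ A₂).ncard := by
        refine Set.ncard_le_ncard_of_forall_subsingleton (canSee T r parent U) ?_
          fun a _ e ⟨⟨he, _⟩, h⟩ e' ⟨⟨he', _⟩, h'⟩ => canSee_unique hT hpar he he' h h'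
        rintro e ⟨he, u, hu, h⟩
        rcases canSee_blockRep_or_exists hT hpar hH he h with h | ⟨x, y, hxy, hd, h⟩
        · exact ⟨_, .inl ⟨u, hu, rfl⟩, h⟩
        · exact ⟨x, .inr ⟨y, hxy, hd⟩, h⟩
    _ ≤ A₁.ncard + A₂.ncard := Set.ncard_union_le _ _
    _ ≤ _ := add_le_add hA₁ hA₂

end

theorem stmt9_general {V : Type*} [Fintype V] (G : SimpleGraph V)
    (T : SimpleGraph V) (hT : T.IsTree) (hTG : T ≤ G)
    (r : V) (parent : V → V)
    (hparent : ∀ v, v ≠ r → T.Adj v (parent v) ∧ T.dist r (parent v) + 1 = T.dist r v)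
    (N : ℕ) (P : Fin N → Set V)
    (c b : ℕ) (hb : 1 ≤ b)
    -- a `T`-restricted shortcut with congestion `c` and block parameter `b`
    (H : Fin N → Set (Sym2 V))
    (hTres : ∀ i, H i ⊆ T.edgeSet)
    (hcong : ∀ e ∈ G.edgeSet, {i : Fin N | e ∈ partEdges G (P i) (H i)}.ncard ≤ c)
    (hblock : ∀ i, numBlocks (P i) (H i) ≤ b)
    -- `U` is a set of tree edges, each of which can see more than `2c` parts relative to `U`
    (U : Set (Sym2 V)) (hUT : U ⊆ T.edgeSet)
    (hU : ∀ e ∈ U, 2 * c < {i : Fin N | ∃ u ∈ P i, canSee T r parent U e u}.ncard) :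
    -- then the number of parts that miss at least `2b` edges of `U` is at most `N/2`
    2 * {i : Fin N | 2 * b ≤ (U ∩ partEdges G (P i) (H i)).ncard}.ncard ≤ N := by
  have hcharge : ∀ i, {e | e ∈ U ∧ ∃ u ∈ P i, canSee T r parent U e u}.ncard
      ≤ b + (U ∩ partEdges G (P i) (H i)).ncard := fun i =>
    (ncard_canSee_le hT hparent U (P i) (H i) (hTres i)).trans <| add_le_add (hblock i) <|
      Set.ncard_le_ncard (Set.inter_subset_inter_right U Set.subset_union_right)
  simpa using two_mul_ncard_heavy_le U (fun i => partEdges G (P i) (H i))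
    (fun e i => ∃ u ∈ P i, canSee T r parent U e u) b c hb hU
    (fun e he => hcong e (edgeSet_mono hTG (hUT he))) hcharge

theorem stmt9 {V : Type*} [Fintype V] (G : SimpleGraph V) (hG : G.Connected)
    (T : SimpleGraph V) (hT : T.IsTree) (hTG : T ≤ G)
    (r : V) (parent : V → V)
    (hparent : ∀ v, v ≠ r → T.Adj v (parent v) ∧ T.dist r (parent v) + 1 = T.dist r v)
    (N : ℕ) (P : Fin N → Set V)
    (hPdisj : ∀ i j, i ≠ j → Disjoint (P i) (P j))
    (hPne : ∀ i, (P i).Nonempty)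
    (hPconn : ∀ i, (G.induce (P i)).Connected)
    (c b : ℕ) (hc : 1 ≤ c) (hb : 1 ≤ b)
    -- a `T`-restricted shortcut with congestion `c` and block parameter `b`
    (H : Fin N → Set (Sym2 V))
    (hTres : ∀ i, H i ⊆ T.edgeSet)
    (hcong : ∀ e ∈ G.edgeSet, {i : Fin N | e ∈ partEdges G (P i) (H i)}.ncard ≤ c)
    (hblock : ∀ i, numBlocks (P i) (H i) ≤ b)
    -- `U` is a set of tree edges, each of which can see more than `2c` parts relative to `U`
    (U : Set (Sym2 V)) (hUT : U ⊆ T.edgeSet)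
    (hU : ∀ e ∈ U, 2 * c < {i : Fin N | ∃ u ∈ P i, canSee T r parent U e u}.ncard) :
    -- then the number of parts that miss at least `2b` edges of `U` is at most `N/2`
    2 * {i : Fin N | 2 * b ≤ (U ∩ partEdges G (P i) (H i)).ncard}.ncard ≤ N :=
  stmt9_general G T hT hTG r parent hparent N P c b hb H hTres hcong hblock U hUT hU
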